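/- arXiv:1507.05811 — 2 statements merged into one kernel-verified Lean document; each statement's English description precedes it below -/
import Mathlib

section
/- If Γ is a nonnegative integer with Γ ≤ n, then the extreme points of U(Γ) = {δ ∈ ℝ^n : ‖δ‖_∞ ≤ 1, ‖δ‖₁ ≤ Γ} are exactly the vectors with entries in {-1, 0, 1} having exactly Γ nonzero entries; in particular, for a linear function cᵀδ, the minimum over U(Γ) equals minus the sum of the Γ largest values of |c_i|. -/
/-! A vertex is extreme because each `±1` entry is extreme in `[-1, 1]`, and once those entries are
fixed they exhaust the budget, forcing all other entries to vanish. Conversely, at an extreme point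
the budget is tight when `Γ ≤ n` (otherwise a coordinate of absolute value below `1` can be moved
both ways), and at most one coordinate has absolute value strictly between `0` and `1` (otherwise
one of them grows while another shrinks at fixed `ℓ¹` norm); since `Γ` is an integer, that last
fractional coordinate cannot exist either. Since `U(Γ)` is compact and convex, Krein–Milman reduces
the minimum of `cᵀδ` to the vertices, where a vertex supported on `S` gives at least
`-∑_{i ∈ S} |c i|`. -/

open Finset

theorem eq_zero_of_add_mem_of_sub_mem_of_mem_extremePoints {𝕜 E : Type*} [Field 𝕜]
    [LinearOrder 𝕜] [IsStrictOrderedRing 𝕜] [AddCommGroup E] [Module 𝕜 E] {A : Set E} {x v : E}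
    (hx : x ∈ A.extremePoints 𝕜) (hadd : x + v ∈ A) (hsub : x - v ∈ A) : v = 0 := by
  have hmid : x ∈ openSegment 𝕜 (x + v) (x - v) :=
    ⟨1 / 2, 1 / 2, by norm_num, by norm_num, by norm_num, by module⟩
  simpa using hx.2 hadd hsub hmid

theorem le_apply_of_forall_mem_extremePoints {E : Type*} [AddCommGroup E] [Module ℝ E]
    [TopologicalSpace E] [T2Space E] [IsTopologicalAddGroup E] [ContinuousSMul ℝ E]
    [LocallyConvexSpace ℝ E] {s : Set E} (hs : IsCompact s) (hconv : Convex ℝ s)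
    (f : StrongDual ℝ E) {m : ℝ} (h : ∀ x ∈ s.extremePoints ℝ, m ≤ f x) :
    ∀ x ∈ s, m ≤ f x := by
  rw [← closure_convexHull_extremePoints hs hconv]
  exact closure_minimal (convexHull_min h (convex_halfSpace_ge f.isLinear m))
    (isClosed_le continuous_const f.continuous)

theorem eq_neg_one_or_eq_zero_or_eq_one_iff_abs {x : ℝ} :
    (x = -1 ∨ x = 0 ∨ x = 1) ↔ (|x| = 0 ∨ |x| = 1) := by
  rw [abs_eq_zero, abs_eq zero_le_one]
  tauto

theorem sum_eq_card_filter_ne_zero {ι : Type*} (s : Finset ι) {a : ι → ℝ}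
    (ha : ∀ k ∈ s, a k = 0 ∨ a k = 1) : ∑ k ∈ s, a k = #{k ∈ s | a k ≠ 0} := by
  rw [← sum_boole]
  refine sum_congr rfl fun k hk => ?_
  rcases ha k hk with h | h <;> simp [h]

theorem sum_abs_eq_card_filter_ne_zero {ι : Type*} [Fintype ι] {δ : ι → ℝ}
    (hδ : ∀ k, |δ k| = 0 ∨ |δ k| = 1) : ∑ k, |δ k| = #{k | δ k ≠ 0} := by
  simpa only [abs_ne_zero] using sum_eq_card_filter_ne_zero univ fun k _ => hδ k

theorem eq_zero_or_eq_one_of_sum_eq_natCast {ι : Type*} [Fintype ι] {a : ι → ℝ} {Γ : ℕ}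
    (ha : ∀ k, a k ∈ Set.Icc 0 1) (hsum : ∑ k, a k = Γ)
    (hfrac : ∀ i j, a i ∈ Set.Ioo 0 1 → a j ∈ Set.Ioo 0 1 → i = j) :
    ∀ k, a k = 0 ∨ a k = 1 := by
  classical
  by_contra! ⟨i, hi0, hi1⟩
  have hi : a i ∈ Set.Ioo 0 1 := ⟨(ha i).1.lt_of_ne' hi0, (ha i).2.lt_of_ne hi1⟩
  have hrest : ∀ k ∈ univ.erase i, a k = 0 ∨ a k = 1 := fun k hk => by
    by_contra! hk'
    exact ne_of_mem_erase hk
      (hfrac k i ⟨(ha k).1.lt_of_ne' hk'.1, (ha k).2.lt_of_ne hk'.2⟩ hi)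
  -- `a i` is the difference of two natural numbers, yet lies strictly between `0` and `1`
  set m := #{k ∈ univ.erase i | a k ≠ 0}
  have hai : a i + m = Γ := by
    rw [← sum_eq_card_filter_ne_zero _ hrest, add_sum_erase _ _ (mem_univ i), hsum]
  have h₁ : m < Γ := by exact_mod_cast (show (m : ℝ) < Γ by linarith [hi.1])
  have h₂ : Γ < m + 1 := by exact_mod_cast (show (Γ : ℝ) < m + 1 by linarith [hi.2])
  omega

def budgetSet (ι : Type*) [Fintype ι] (Γ : ℝ) : Set (ι → ℝ) :=
  {δ | (∀ i, |δ i| ≤ 1) ∧ ∑ i, |δ i| ≤ Γ}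

def budgetVertices (ι : Type*) [Fintype ι] (Γ : ℕ) : Set (ι → ℝ) :=
  {δ | (∀ i, δ i = -1 ∨ δ i = 0 ∨ δ i = 1) ∧ #{i | δ i ≠ 0} = Γ}

section BudgetSet

variable {ι : Type*} [Fintype ι]

theorem convex_budgetSet (Γ : ℝ) : Convex ℝ (budgetSet ι Γ) := by
  intro x hx y hy a b ha hb hab
  have habs : ∀ i, |a * x i + b * y i| ≤ a * |x i| + b * |y i| := fun i => by
    simpa [abs_mul, abs_of_nonneg ha, abs_of_nonneg hb] using abs_add_le (a * x i) (b * y i)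
  refine ⟨fun i => ?_, ?_⟩
  · have := hx.1 i; have := hy.1 i
    simp only [Pi.add_apply, Pi.smul_apply, smul_eq_mul]
    nlinarith [habs i]
  · calc ∑ i, |(a • x + b • y) i| ≤ ∑ i, (a * |x i| + b * |y i|) := sum_le_sum fun i _ => habs i
      _ = a * ∑ i, |x i| + b * ∑ i, |y i| := by rw [sum_add_distrib, mul_sum, mul_sum]
      _ ≤ a * Γ + b * Γ := by gcongr; exacts [hx.2, hy.2]
      _ = Γ := by rw [← add_mul, hab, one_mul]

theorem isCompact_budgetSet (Γ : ℝ) : IsCompact (budgetSet ι Γ) := by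
  refine (isCompact_univ_pi fun _ => isCompact_Icc (a := (-1 : ℝ)) (b := 1)).of_isClosed_subset
    ?_ fun δ hδ i _ => abs_le.mp (hδ.1 i)
  show IsClosed ({δ : ι → ℝ | ∀ i, |δ i| ≤ 1} ∩ {δ | ∑ i, |δ i| ≤ Γ})
  simp only [Set.ofPred_forall]
  exact (isClosed_iInter fun i => isClosed_le (by fun_prop) continuous_const).inter
    (isClosed_le (by fun_prop) continuous_const)

section Perturbation

variable {Γ : ℝ} {δ : ι → ℝ}

theorem add_mem_budgetSet {v : ι → ℝ} (hbound : ∀ k, |δ k| + |v k| ≤ 1)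
    (hsum : ∑ k, (|δ k| + |v k|) ≤ Γ) : δ + v ∈ budgetSet ι Γ :=
  ⟨fun k => (abs_add_le _ _).trans (hbound k),
    (sum_le_sum fun _ _ => abs_add_le _ _).trans hsum⟩

theorem one_add_mul_mem_budgetSet {w : ι → ℝ} (hw : ∀ k, -1 ≤ w k)
    (hbound : ∀ k, (1 + w k) * |δ k| ≤ 1) (hsum : ∑ k, (1 + w k) * |δ k| ≤ Γ) :
    (fun k => (1 + w k) * δ k) ∈ budgetSet ι Γ := by
  have habs : ∀ k, |(1 + w k) * δ k| = (1 + w k) * |δ k| := fun k => by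
    rw [abs_mul, abs_of_nonneg (by linarith [hw k])]
  exact ⟨fun k => (habs k).trans_le (hbound k), by simpa only [habs] using hsum⟩

namespace budgetSet

variable (hδ : δ ∈ (budgetSet ι Γ).extremePoints ℝ)
include hδ

theorem abs_eq_one_of_mem_extremePoints_of_sum_abs_lt (hlt : ∑ k, |δ k| < Γ) (i : ι) :
    |δ i| = 1 := by
  classical
  by_contra hi
  set ε := min (1 - |δ i|) (Γ - ∑ k, |δ k|)
  have hε : 0 < ε := lt_min (by linarith [(hδ.1.1 i).lt_of_ne hi]) (by linarith)
  set v : ι → ℝ := Pi.single i ε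
  have hbound : ∀ k, |δ k| + |v k| ≤ 1 := fun k => by
    rcases eq_or_ne k i with rfl | hk
    · simp only [v, Pi.single_eq_same, abs_of_pos hε]
      linarith [min_le_left (1 - |δ k|) (Γ - ∑ k, |δ k|)]
    · simpa [v, hk] using hδ.1.1 k
  have hsum : ∑ k, (|δ k| + |v k|) ≤ Γ := by
    have hv : ∑ k, |v k| = ε := by
      rw [Fintype.sum_eq_single i fun k hk => by simp [v, hk]]
      simp [v, abs_of_pos hε]
    rw [sum_add_distrib, hv]
    linarith [min_le_right (1 - |δ i|) (Γ - ∑ k, |δ k|)]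
  have hzero := eq_zero_of_add_mem_of_sub_mem_of_mem_extremePoints hδ
    (add_mem_budgetSet hbound hsum)
    (by simpa only [sub_eq_add_neg] using
      add_mem_budgetSet (v := -v) (by simpa using hbound) (by simpa using hsum))
  simpa [v, hε.ne'] using congrFun hzero i

theorem sum_abs_eq_of_mem_extremePoints (hΓ : Γ ≤ Fintype.card ι) : ∑ k, |δ k| = Γ := by
  refine le_antisymm hδ.1.2 (not_lt.mp fun hlt => hlt.not_ge ?_)
  calc Γ ≤ Fintype.card ι := hΓ
    _ = ∑ k, |δ k| := by
      simp [abs_eq_one_of_mem_extremePoints_of_sum_abs_lt hδ hlt]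

theorem mul_eq_zero_of_mem_extremePoints {w : ι → ℝ} (hw : ∀ k, |w k| ≤ 1)
    (hbound : ∀ k, (1 + |w k|) * |δ k| ≤ 1) (hsum : ∑ k, w k * |δ k| = 0) (k : ι) :
    w k * δ k = 0 := by
  have hmem : ∀ σ : ι → ℝ, (∀ k, |σ k| = |w k|) → ∑ k, σ k * |δ k| = 0 →
      (fun k => (1 + σ k) * δ k) ∈ budgetSet ι Γ := fun σ hσ hσsum =>
    one_add_mul_mem_budgetSet (fun k => (abs_le.mp ((hσ k).trans_le (hw k))).1)
      (fun k => (mul_le_mul_of_nonneg_right (by linarith [le_abs_self (σ k), hσ k])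
        (abs_nonneg _)).trans (hbound k))
      (by simpa [add_mul, sum_add_distrib, hσsum] using hδ.1.2)
  have hzero := eq_zero_of_add_mem_of_sub_mem_of_mem_extremePoints hδ (v := fun k => w k * δ k)
    (by convert hmem w (fun _ => rfl) hsum using 1; ext; simp [add_mul])
    (by convert hmem (-w) (by simp) (by simpa using hsum) using 1; ext; simp; ring)
  exact congrFun hzero k

theorem eq_of_abs_mem_Ioo_of_mem_extremePoints {i j : ι} (hi : |δ i| ∈ Set.Ioo 0 1)
    (hj : |δ j| ∈ Set.Ioo 0 1) : i = j := by
  classical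
  by_contra hij
  set ε := min (1 - |δ i|) (1 - |δ j|)
  have hε : 0 < ε := lt_min (by linarith [hi.2]) (by linarith [hj.2])
  -- raise `|δ i|` and lower `|δ j|` by the same amount, keeping the budget fixed
  set w : ι → ℝ := Pi.single i (ε * |δ j|) + Pi.single j (-(ε * |δ i|))
  have hwi : w i = ε * |δ j| := by simp [w, Ne.symm hij]
  have hwj : w j = -(ε * |δ i|) := by simp [w, hij]
  have hwk : ∀ k, k ≠ i → k ≠ j → w k = 0 := fun k hki hkj => by simp [w, hki, hkj]
  have hεi : ε ≤ 1 - |δ i| := min_le_left _ _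
  have hεj : ε ≤ 1 - |δ j| := min_le_right _ _
  have hδ1 := hδ.1.1
  have hbound : ∀ k, |w k| ≤ ε ∧ (1 + |w k|) * |δ k| ≤ 1 := fun k => by
    by_cases hki : k = i
    · subst hki
      rw [hwi, abs_of_nonneg (by positivity)]
      have := mul_le_mul_of_nonneg_left (mul_le_one₀ (hδ1 j) (abs_nonneg _) (hδ1 k)) hε.le
      constructor <;> nlinarith [abs_nonneg (δ j), hδ1 j]
    by_cases hkj : k = j
    · subst hkj
      rw [hwj, abs_neg, abs_of_nonneg (by positivity)]
      have := mul_le_mul_of_nonneg_left (mul_le_one₀ (hδ1 i) (abs_nonneg _) (hδ1 k)) hε.le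
      constructor <;> nlinarith [abs_nonneg (δ i), hδ1 i]
    · simpa [hwk k hki hkj, hε.le] using hδ1 k
  have hsum : ∑ k, w k * |δ k| = 0 := by
    rw [Fintype.sum_eq_add i j hij fun k hk => by simp [hwk k hk.1 hk.2], hwi, hwj]
    ring
  have := mul_eq_zero_of_mem_extremePoints hδ
    (fun k => (hbound k).1.trans (by linarith [abs_nonneg (δ i)])) (fun k => (hbound k).2) hsum i
  exact mul_ne_zero (mul_ne_zero hε.ne' hj.1.ne') (abs_pos.mp hi.1) (hwi ▸ this)

end budgetSet

end Perturbation

theorem extremePoints_budgetSet_subset {Γ : ℕ} (hΓ : Γ ≤ Fintype.card ι) :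
    (budgetSet ι Γ).extremePoints ℝ ⊆ budgetVertices ι Γ := by
  intro δ hδ
  have hsum := budgetSet.sum_abs_eq_of_mem_extremePoints hδ (by exact_mod_cast hΓ)
  have h01 : ∀ k, |δ k| = 0 ∨ |δ k| = 1 :=
    eq_zero_or_eq_one_of_sum_eq_natCast (fun k => ⟨abs_nonneg _, hδ.1.1 k⟩) hsum
      fun _ _ => budgetSet.eq_of_abs_mem_Ioo_of_mem_extremePoints hδ
  refine ⟨fun k => eq_neg_one_or_eq_zero_or_eq_one_iff_abs.mpr (h01 k), ?_⟩
  exact_mod_cast (sum_abs_eq_card_filter_ne_zero h01).symm.trans hsum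

section Vertices

variable {Γ : ℕ} {δ : ι → ℝ} (hδ : δ ∈ budgetVertices ι Γ)
include hδ

theorem abs_eq_zero_or_eq_one_of_mem_budgetVertices (k : ι) : |δ k| = 0 ∨ |δ k| = 1 :=
  eq_neg_one_or_eq_zero_or_eq_one_iff_abs.mp (hδ.1 k)

theorem sum_abs_eq_of_mem_budgetVertices : ∑ k, |δ k| = Γ := by
  rw [sum_abs_eq_card_filter_ne_zero (abs_eq_zero_or_eq_one_of_mem_budgetVertices hδ), hδ.2]

theorem mem_budgetSet_of_mem_budgetVertices : δ ∈ budgetSet ι Γ :=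
  ⟨fun k => by rcases abs_eq_zero_or_eq_one_of_mem_budgetVertices hδ k with h | h <;> simp [h],
    (sum_abs_eq_of_mem_budgetVertices hδ).le⟩

theorem eq_of_mem_budgetSet_of_eqOn_support {x : ι → ℝ} (hx : x ∈ budgetSet ι Γ)
    (hxδ : ∀ k, δ k ≠ 0 → x k = δ k) : x = δ := by
  have hsupp : ∑ k ∈ {k | δ k ≠ 0}, |x k| = Γ := by
    rw [sum_congr rfl fun k hk => by rw [hxδ k (mem_filter.mp hk).2]]
    rw [← sum_abs_eq_of_mem_budgetVertices hδ]
    exact sum_filter_of_ne fun k _ h => abs_ne_zero.mp h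
  have hoff : ∑ k ∈ {k | ¬δ k ≠ 0}, |x k| ≤ 0 := by
    linarith [sum_filter_add_sum_filter_not univ (fun k => δ k ≠ 0) fun k => |x k|, hx.2]
  funext k
  by_cases hk : δ k ≠ 0
  · exact hxδ k hk
  · have hxk : |x k| ≤ 0 :=
      (single_le_sum (fun k _ => abs_nonneg (x k)) (mem_filter.mpr ⟨mem_univ k, hk⟩)).trans hoff
    rw [not_not.mp hk]
    exact abs_nonpos_iff.mp hxk

theorem mem_extremePoints_of_mem_budgetVertices : δ ∈ (budgetSet ι Γ).extremePoints ℝ := by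
  refine ⟨mem_budgetSet_of_mem_budgetVertices hδ, fun x hx y hy hseg =>
    eq_of_mem_budgetSet_of_eqOn_support hδ hx fun k hk => ?_⟩
  have hext : δ k ∈ (Set.Icc (-1 : ℝ) 1).extremePoints ℝ := by
    rw [Set.extremePoints_Icc (by norm_num)]
    rcases hδ.1 k with h | h | h
    exacts [.inl h, absurd h hk, .inr h]
  obtain ⟨a, b, ha, hb, hab, hxy⟩ := hseg
  exact hext.2 (abs_le.mp (hx.1 k)) (abs_le.mp (hy.1 k))
    ⟨a, b, ha, hb, hab, by simp [← hxy]⟩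

end Vertices

theorem extremePoints_budgetSet {Γ : ℕ} (hΓ : Γ ≤ Fintype.card ι) :
    (budgetSet ι Γ).extremePoints ℝ = budgetVertices ι Γ :=
  (extremePoints_budgetSet_subset hΓ).antisymm fun _ => mem_extremePoints_of_mem_budgetVertices

theorem neg_sum_abs_le_sum_mul (c : ι → ℝ) {v : ι → ℝ} (hv : ∀ i, |v i| ≤ 1) :
    -∑ i ∈ {i | v i ≠ 0}, |c i| ≤ ∑ i, c i * v i := by
  rw [sum_filter, ← sum_neg_distrib]
  refine sum_le_sum fun i _ => ?_
  split_ifs with h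
  · calc -|c i| ≤ -|c i * v i| := by
          rw [abs_mul, neg_le_neg_iff]; exact mul_le_of_le_one_right (abs_nonneg _) (hv i)
      _ ≤ c i * v i := neg_abs_le _
  · simp [not_not.mp h]

theorem exists_mem_budgetVertices_sum_mul_eq (c : ι → ℝ) (S : Finset ι) :
    ∃ v ∈ budgetVertices ι #S, ∑ i, c i * v i = -∑ i ∈ S, |c i| := by
  classical
  refine ⟨fun i => if i ∈ S then (if 0 ≤ c i then -1 else 1) else 0,
    ⟨fun i => by dsimp only; split_ifs <;> norm_num, ?_⟩, ?_⟩
  · congr 1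
    ext i
    simp only [mem_filter, mem_univ, true_and]
    split_ifs <;> simp [*]
  · rw [← sum_neg_distrib, ← Fintype.sum_ite_mem S]
    refine sum_congr rfl fun i _ => ?_
    dsimp only
    split_ifs with hi hc
    · rw [abs_of_nonneg hc]; ring
    · rw [abs_of_neg (not_le.mp hc)]; ring
    · ring

theorem isLeast_image_budgetSet (c : ι → ℝ) {Γ : ℕ} (hne : (univ.powersetCard Γ).Nonempty) :
    IsLeast ((fun δ => ∑ i, c i * δ i) '' budgetSet ι Γ)
      (-(univ.powersetCard Γ).sup' hne fun S => ∑ i ∈ S, |c i|) := by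
  have hΓ : Γ ≤ Fintype.card ι := by simpa using powersetCard_nonempty.mp hne
  constructor
  · obtain ⟨S, hS, hmax⟩ := exists_mem_eq_sup' hne fun S => ∑ i ∈ S, |c i|
    obtain ⟨v, hv, hcv⟩ := exists_mem_budgetVertices_sum_mul_eq c S
    rw [(mem_powersetCard.mp hS).2] at hv
    exact ⟨v, mem_budgetSet_of_mem_budgetVertices hv, by beta_reduce; rw [hmax, hcv]⟩
  · rintro _ ⟨δ, hδ, rfl⟩
    let f : StrongDual ℝ (ι → ℝ) := ∑ i, c i • ContinuousLinearMap.proj i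
    have hf : ∀ x, f x = ∑ i, c i * x i := fun x => by simp [f]
    show _ ≤ ∑ i, c i * δ i
    rw [← hf]
    refine le_apply_of_forall_mem_extremePoints (isCompact_budgetSet _) (convex_budgetSet _) f
      (fun v hv => ?_) δ hδ
    rw [extremePoints_budgetSet hΓ] at hv
    rw [hf]
    refine (neg_sum_abs_le_sum_mul c (mem_budgetSet_of_mem_budgetVertices hv).1).trans' ?_
    exact neg_le_neg (le_sup' (fun S => ∑ i ∈ S, |c i|)
      (mem_powersetCard.mpr ⟨subset_univ _, hv.2⟩))

end BudgetSet

theorem budget_set_extreme_points (n : ℕ) (Γ : ℕ) (hΓ : Γ ≤ n) (c : Fin n → ℝ) :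
    Set.extremePoints ℝ
        {δ : Fin n → ℝ | (∀ i, |δ i| ≤ 1) ∧ ∑ i, |δ i| ≤ (Γ : ℝ)} =
      {δ : Fin n → ℝ | (∀ i, δ i = -1 ∨ δ i = 0 ∨ δ i = 1) ∧
        (Finset.univ.filter (fun i => δ i ≠ 0)).card = Γ} ∧
    IsLeast ((fun δ : Fin n → ℝ => ∑ i, c i * δ i) ''
        {δ : Fin n → ℝ | (∀ i, |δ i| ≤ 1) ∧ ∑ i, |δ i| ≤ (Γ : ℝ)})
      (-(Finset.univ.powersetCard Γ).sup'
        (Finset.powersetCard_nonempty.mpr (by simpa using hΓ))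
        (fun S => ∑ i ∈ S, |c i|)) :=
  ⟨extremePoints_budgetSet (by simpa using hΓ), isLeast_image_budgetSet c _⟩
end

section
/- Let U = {δ ∈ ℝ^n : Lδ ≥ l} be a nonempty bounded polyhedron and a ∈ ℝ^n, b ∈ ℝ. The robust constraint 'aᵀδ ≥ b for all δ ∈ U' holds if and only if there exists λ ≥ 0 in ℝ^ℓ with Lᵀλ = a and λᵀl ≥ b. -/
/-!
Weak duality is the chain `b ≤ λᵀl ≤ λᵀLδ = aᵀδ`. For the converse we use Farkas' lemma: a
finitely generated cone is closed (by the conic Carathéodory theorem it is a finite union of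
images of orthants under injective linear maps), so a point outside it is separated by
Hahn–Banach. Applied to the cone in `ℝⁿ × ℝ` generated by the rows `(Lᵢ, lᵢ)` and by `(0, -1)`,
the absence of a multiplier `λ` yields `d` and `s ≥ 0` with `s • l ≤ L d` and `aᵀd < s b`.
If `s > 0`, the point `d / s` of `U` violates the constraint; if `s = 0`, `d` is a nonzero
recession direction of the nonempty set `U`, which contradicts boundedness.
-/

section ConicCaratheodory

variable {ι E : Type*} [AddCommGroup E] [Module ℝ E]

lemma exists_sub_mul_nonneg_eq_zero {s : Finset ι} {c g : ι → ℝ} (hc : ∀ i ∈ s, 0 ≤ c i)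
    (hg : ∃ i ∈ s, 0 < g i) :
    ∃ τ : ℝ, ∃ i₀ ∈ s, (∀ i ∈ s, 0 ≤ c i - τ * g i) ∧ c i₀ - τ * g i₀ = 0 := by
  obtain ⟨i₀, hi₀, hmin⟩ := (s.filter (0 < g ·)).exists_min_image (fun i => c i / g i)
    (by simpa [Finset.Nonempty] using hg)
  rw [Finset.mem_filter] at hi₀
  refine ⟨c i₀ / g i₀, i₀, hi₀.1, fun i hi => ?_, by field_simp [hi₀.2.ne']; ring⟩
  rcases lt_or_ge 0 (g i) with hgi | hgi
  · have := (le_div_iff₀ hgi).1 (hmin i (Finset.mem_filter.2 ⟨hi, hgi⟩))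
    linarith
  · nlinarith [hc i hi, div_nonneg (hc i₀ hi₀.1) hi₀.2.le]

lemma exists_erase_sum_smul_eq_of_not_linearIndepOn [DecidableEq ι] {v : ι → E} {s : Finset ι}
    {c : ι → ℝ} (hc : ∀ i ∈ s, 0 ≤ c i) (hv : ¬LinearIndepOn ℝ v s) :
    ∃ i₀ ∈ s, ∃ c' : ι → ℝ, (∀ i ∈ s, 0 ≤ c' i) ∧
      ∑ i ∈ s.erase i₀, c' i • v i = ∑ i ∈ s, c i • v i := by
  obtain ⟨g, hg, hpos⟩ : ∃ g : ι → ℝ, ∑ i ∈ s, g i • v i = 0 ∧ ∃ i ∈ s, 0 < g i := by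
    obtain ⟨g, hg, j, hj, hgj⟩ := not_linearIndepOn_finset_iff.1 hv
    rcases hgj.lt_or_gt with hneg | hpos
    · exact ⟨-g, by simp [Finset.sum_neg_distrib, hg], j, hj, neg_pos.2 hneg⟩
    · exact ⟨g, hg, j, hj, hpos⟩
  obtain ⟨τ, i₀, hi₀, hnonneg, hzero⟩ := exists_sub_mul_nonneg_eq_zero hc hpos
  refine ⟨i₀, hi₀, fun i => c i - τ * g i, hnonneg, ?_⟩
  rw [Finset.sum_erase _ (by simp [hzero])]
  simp [sub_smul, Finset.sum_sub_distrib, mul_smul, ← Finset.smul_sum, hg]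

theorem exists_linearIndepOn_sum_smul_eq (v : ι → E) (s : Finset ι) {c : ι → ℝ}
    (hc : ∀ i ∈ s, 0 ≤ c i) :
    ∃ t ⊆ s, LinearIndepOn ℝ v t ∧
      ∃ c' : ι → ℝ, (∀ i ∈ t, 0 ≤ c' i) ∧ ∑ i ∈ t, c' i • v i = ∑ i ∈ s, c i • v i := by
  classical
  induction s using Finset.strongInduction generalizing c with
  | H s ih =>
  by_cases hv : LinearIndepOn ℝ v s
  · exact ⟨s, subset_rfl, hv, c, hc, rfl⟩
  obtain ⟨i₀, hi₀, c', hc', hsum⟩ := exists_erase_sum_smul_eq_of_not_linearIndepOn hc hv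
  obtain ⟨t, hts, ht, c'', hc'', hsum'⟩ :=
    ih _ (Finset.erase_ssubset hi₀) fun i hi => hc' i (Finset.mem_of_mem_erase hi)
  exact ⟨t, hts.trans (s.erase_subset i₀), ht, c'', hc'', hsum'.trans hsum⟩

end ConicCaratheodory

section Farkas

variable {ι E : Type*} [Fintype ι] [TopologicalSpace E] [AddCommGroup E] [IsTopologicalAddGroup E]
  [Module ℝ E] [ContinuousSMul ℝ E] [T2Space E]

lemma isClosed_image_Ici_of_linearIndependent {v : ι → E} (hv : LinearIndependent ℝ v) :
    IsClosed (Fintype.linearCombination ℝ v '' Set.Ici 0) :=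
  (LinearMap.isClosedEmbedding_of_injective (LinearMap.ker_eq_bot.2
    (linearIndependent_iff_injective_fintypeLinearCombination.1 hv))).isClosedMap _ isClosed_Ici

theorem isClosed_image_linearCombination_Ici (v : ι → E) :
    IsClosed (Fintype.linearCombination ℝ v '' Set.Ici 0) := by
  classical
  have hunion : Fintype.linearCombination ℝ v '' Set.Ici 0 =
      ⋃ t ∈ {t : Finset ι | LinearIndepOn ℝ v t},
        Fintype.linearCombination ℝ (fun i : t => v i) '' Set.Ici 0 := by
    ext x
    simp only [Set.mem_image, Set.mem_iUnion, Set.mem_Ici, Set.mem_ofPred_eq,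
      Fintype.linearCombination_apply, exists_prop]
    constructor
    · rintro ⟨c, hc, rfl⟩
      obtain ⟨t, -, ht, c', hc', hsum⟩ :=
        exists_linearIndepOn_sum_smul_eq v Finset.univ fun i _ => hc i
      exact ⟨t, ht, fun i => c' i, fun i => hc' i i.2,
        (t.sum_coe_sort fun i => c' i • v i).trans hsum⟩
    · rintro ⟨t, -, c, hc, rfl⟩
      refine ⟨fun i => if h : i ∈ t then c ⟨i, h⟩ else 0, fun i => ?_, ?_⟩
      · dsimp only
        split
        exacts [hc _, le_rfl]
      · rw [← Finset.sum_subset t.subset_univ fun i _ hi => by simp [hi],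
          ← t.sum_coe_sort]
        simp
  rw [hunion]
  exact (Set.toFinite _).isClosed_biUnion fun _ ht => isClosed_image_Ici_of_linearIndependent ht

theorem exists_strongDual_nonneg_of_notMem_image_Ici [LocallyConvexSpace ℝ E] (v : ι → E) {x : E}
    (hx : x ∉ Fintype.linearCombination ℝ v '' Set.Ici 0) :
    ∃ f : StrongDual ℝ E, (∀ i, 0 ≤ f (v i)) ∧ f x < 0 := by
  classical
  let C : ProperCone ℝ E :=
    ⟨(PointedCone.positive ℝ (ι → ℝ)).map ((Fintype.linearCombination ℝ v).restrictScalars _),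
      isClosed_image_linearCombination_Ici v⟩
  obtain ⟨f, hf, hfx⟩ := C.hyperplane_separation_point hx
  exact ⟨f, fun i => hf _ ⟨Pi.single i 1, by simp, by simp⟩, hfx⟩

end Farkas

lemma not_isBounded_of_forall_add_smul_mem {E : Type*} [NormedAddCommGroup E] [NormedSpace ℝ E]
    {S : Set E} {x d : E} (hd : d ≠ 0) (hray : ∀ t : ℝ, 0 ≤ t → x + t • d ∈ S) :
    ¬Bornology.IsBounded S := by
  intro hS
  obtain ⟨R, hR⟩ := isBounded_iff_forall_norm_le.1 hS
  have hx : ‖x‖ ≤ R := by simpa using hR _ (hray 0 le_rfl)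
  have hd' : 0 < ‖d‖ := norm_pos_iff.2 hd
  set t := (R + ‖x‖ + 1) / ‖d‖
  have ht : 0 ≤ t := div_nonneg (by linarith [norm_nonneg x]) hd'.le
  have : R + ‖x‖ + 1 ≤ R + ‖x‖ := calc
    R + ‖x‖ + 1 = ‖t • d‖ := by rw [norm_smul, Real.norm_of_nonneg ht, div_mul_cancel₀ _ hd'.ne']
    _ = ‖(x + t • d) - x‖ := by rw [add_sub_cancel_left]
    _ ≤ ‖x + t • d‖ + ‖x‖ := norm_sub_le _ _
    _ ≤ R + ‖x‖ := by gcongr; exact hR _ (hray t ht)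
  linarith

section Matrix

open Matrix

variable {m k : Type*} [Fintype m] [Fintype k]

lemma exists_dotProduct_add_mul_eq (f : ((k → ℝ) × ℝ) →ₗ[ℝ] ℝ) :
    ∃ (d : k → ℝ) (s : ℝ), ∀ x r, f (x, r) = d ⬝ᵥ x + r * s := by
  classical
  set g := f.comp (LinearMap.inl ℝ _ ℝ)
  refine ⟨(dotProductEquiv ℝ k).symm g, f (0, 1), fun x r => ?_⟩
  have hg := LinearMap.congr_fun ((dotProductEquiv ℝ k).apply_symm_apply g) x
  rw [dotProductEquiv_apply_apply] at hg
  rw [hg, show (x, r) = (x, 0) + r • ((0 : k → ℝ), (1 : ℝ)) by simp, map_add, map_smul]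
  rfl

theorem Matrix.exists_certificate_of_not_exists_multiplier (L : Matrix m k ℝ) (l : m → ℝ)
    (a : k → ℝ) (b : ℝ) (h : ¬∃ lam : m → ℝ, 0 ≤ lam ∧ Lᵀ *ᵥ lam = a ∧ b ≤ lam ⬝ᵥ l) :
    ∃ (d : k → ℝ) (s : ℝ), 0 ≤ s ∧ s • l ≤ L *ᵥ d ∧ a ⬝ᵥ d < s * b := by
  let v : Option m → (k → ℝ) × ℝ := fun o => o.elim (0, -1) fun i => (L i, l i)
  have hab : (a, b) ∉ Fintype.linearCombination ℝ v '' Set.Ici 0 := by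
    rintro ⟨c, hc, hcab⟩
    simp only [Fintype.linearCombination_apply, Fintype.sum_option, v, Option.elim, Prod.ext_iff,
      Prod.fst_add, Prod.snd_add, Prod.fst_sum, Prod.snd_sum, Prod.smul_fst, Prod.smul_snd,
      smul_zero, zero_add, smul_eq_mul, mul_neg, mul_one] at hcab
    refine h ⟨fun i => c (some i), fun i => hc _, ?_, ?_⟩
    · rw [← hcab.1, mulVec_transpose, vecMul_eq_sum]
    · have hsum : ∑ i, c (some i) * l i = (fun i => c (some i)) ⬝ᵥ l := rfl
      linarith [show 0 ≤ c none from hc none]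
  obtain ⟨f, hf, hfab⟩ := exists_strongDual_nonneg_of_notMem_image_Ici v hab
  obtain ⟨d, s, hds⟩ := exists_dotProduct_add_mul_eq (f : ((k → ℝ) × ℝ) →ₗ[ℝ] ℝ)
  simp only [ContinuousLinearMap.coe_coe] at hds
  refine ⟨d, -s, by simpa [v, hds] using hf none, fun i => ?_, ?_⟩
  · have hi := hf (some i)
    simp only [v, Option.elim, hds] at hi
    simp only [Pi.smul_apply, smul_eq_mul, neg_mul, mulVec, dotProduct_comm]
    linarith
  · rw [hds] at hfab
    rw [dotProduct_comm]
    linarith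

theorem Matrix.le_dotProduct_of_multiplier {L : Matrix m k ℝ} {l : m → ℝ} {a : k → ℝ} {b : ℝ}
    {lam : m → ℝ} (hlam : 0 ≤ lam) (hLa : Lᵀ *ᵥ lam = a) (hb : b ≤ lam ⬝ᵥ l) {δ : k → ℝ}
    (hδ : l ≤ L *ᵥ δ) : b ≤ a ⬝ᵥ δ :=
  calc b ≤ lam ⬝ᵥ l := hb
    _ ≤ lam ⬝ᵥ (L *ᵥ δ) := dotProduct_le_dotProduct_of_nonneg_left hδ hlam
    _ = a ⬝ᵥ δ := by rw [← hLa, mulVec_transpose, dotProduct_mulVec]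

end Matrix

open Matrix in
theorem robust_constraint_duality (n ℓ : ℕ)
    (L : Matrix (Fin ℓ) (Fin n) ℝ) (l : Fin ℓ → ℝ)
    (a : Fin n → ℝ) (b : ℝ)
    (hne : {δ : Fin n → ℝ | l ≤ L.mulVec δ}.Nonempty)
    (hbdd : Bornology.IsBounded {δ : Fin n → ℝ | l ≤ L.mulVec δ}) :
    (∀ δ : Fin n → ℝ, l ≤ L.mulVec δ → b ≤ a ⬝ᵥ δ) ↔
      ∃ lam : Fin ℓ → ℝ, 0 ≤ lam ∧ Lᵀ.mulVec lam = a ∧ b ≤ lam ⬝ᵥ l := by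
  refine ⟨fun H => ?_, fun ⟨lam, hlam, hLa, hb⟩ δ => le_dotProduct_of_multiplier hlam hLa hb⟩
  by_contra hno
  obtain ⟨d, s, hs, hLd, had⟩ := exists_certificate_of_not_exists_multiplier L l a b hno
  rcases hs.eq_or_lt with rfl | hs
  · obtain ⟨δ₀, hδ₀⟩ := hne
    refine not_isBounded_of_forall_add_smul_mem (x := δ₀) (d := d) ?_ (fun t ht => ?_) hbdd
    · rintro rfl
      simp at had
    · show l ≤ L *ᵥ (δ₀ + t • d)
      rw [mulVec_add, mulVec_smul]
      exact le_add_of_le_of_nonneg hδ₀ (smul_nonneg ht (by simpa using hLd))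
  · have hδ : l ≤ L *ᵥ (s⁻¹ • d) := by
      rw [mulVec_smul, ← inv_smul_smul₀ hs.ne' l]
      exact smul_le_smul_of_nonneg_left hLd (inv_nonneg.2 hs.le)
    have := H _ hδ
    rw [dotProduct_smul, smul_eq_mul, le_inv_mul_iff₀ hs] at this
    linarith
end
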